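/- arXiv:1807.03506 — 7 statements merged into one kernel-verified Lean document; each statement's English description precedes it below -/
import Mathlib

section
/- Let n ∈ ℕ and let T be a monic real polynomial of degree n+1 such that ∫₀¹ t^k · T(t) dt = 0 for every k = 0, 1, ..., n. Assume T has n+1 pairwise distinct real roots a₀, ..., aₙ. Define the weights R_j = ∫₀¹ ∏_{i ≠ j} (t − a_i)/(a_j − a_i) dt for j = 0, ..., n. Then for every real polynomial p of degree at most 2n+1 one has Σ_{j=0}^{n} R_j · p(a_j) = ∫₀¹ p(t) dt. -/
open Polynomial intervalIntegral

lemma gq_orth (n : ℕ) (T : Polynomial ℝ)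
    (horth : ∀ k : ℕ, k ≤ n → ∫ t in (0:ℝ)..1, t ^ k * T.eval t = 0)
    (f : Polynomial ℝ) (hf : f.natDegree ≤ n) :
    ∫ t in (0:ℝ)..1, f.eval t * T.eval t = 0 := by
  have hev : ∀ t : ℝ, f.eval t * T.eval t
      = ∑ k ∈ Finset.range (n+1), f.coeff k * (t ^ k * T.eval t) := by
    intro t
    rw [Polynomial.eval_eq_sum_range' (lt_of_le_of_lt hf (Nat.lt_succ_self n)), Finset.sum_mul]
    simp [mul_assoc]
  simp only [hev]
  rw [intervalIntegral.integral_finset_sum]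
  · refine Finset.sum_eq_zero fun k hk => ?_
    rw [intervalIntegral.integral_const_mul, horth k (Nat.lt_succ_iff.mp (Finset.mem_range.mp hk)),
      mul_zero]
  · intro k _
    exact (Continuous.intervalIntegrable (by fun_prop) _ _)

lemma gq_basis_eval (n : ℕ) (a : Fin (n+1) → ℝ) (j : Fin (n+1)) (t : ℝ) :
    (Lagrange.basis Finset.univ a j).eval t
      = ∏ i ∈ Finset.univ.erase j, (t - a i) / (a j - a i) := by
  rw [Lagrange.basis, Polynomial.eval_prod]
  refine Finset.prod_congr rfl fun i _ => ?_
  simp [Lagrange.basisDivisor, div_eq_inv_mul]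

/-- Gauss's main theorem: if the monic node polynomial `T` of degree `n+1` is orthogonal
on `[0,1]` to all monomials of degree `≤ n`, and its roots are the pairwise distinct nodes
`a 0, …, a n`, then the interpolatory quadrature rule with these nodes is exact for all
polynomials of degree at most `2n+1`. -/
theorem gauss_quadrature_exactness (n : ℕ) (T : Polynomial ℝ) (hT : T.Monic)
    (hdeg : T.natDegree = n + 1)
    (horth : ∀ k : ℕ, k ≤ n → ∫ t in (0:ℝ)..1, t ^ k * T.eval t = 0)
    (a : Fin (n + 1) → ℝ) (hinj : Function.Injective a)
    (hroots : ∀ j, T.eval (a j) = 0)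
    (R : Fin (n + 1) → ℝ)
    (hR : ∀ j, R j = ∫ t in (0:ℝ)..1, ∏ i ∈ Finset.univ.erase j, (t - a i) / (a j - a i))
    (p : Polynomial ℝ) (hp : p.degree ≤ (2 * n + 1 : ℕ)) :
    ∑ j, R j * p.eval (a j) = ∫ t in (0:ℝ)..1, p.eval t := by
  set q := p /ₘ T with hq
  set r := p %ₘ T with hr
  have hpdecomp : r + T * q = p := Polynomial.modByMonic_add_div p T
  have hqdeg : q.natDegree ≤ n := by
    have hpnat : p.natDegree ≤ 2 * n + 1 := Polynomial.natDegree_le_iff_degree_le.mpr hp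
    rw [hq, Polynomial.natDegree_divByMonic p hT, hdeg]
    omega
  have hrdeg : r.degree < (n + 1 : ℕ) := by
    have := Polynomial.degree_modByMonic_lt p hT
    rwa [Polynomial.degree_eq_natDegree hT.ne_zero, hdeg] at this
  -- values at nodes
  have hval : ∀ j, p.eval (a j) = r.eval (a j) := by
    intro j
    rw [← hpdecomp]
    simp [hroots j]
  -- r equals its Lagrange interpolant
  have hcard : r.degree < (Finset.univ : Finset (Fin (n+1))).card := by
    simpa using hrdeg
  have hinterp : r = Lagrange.interpolate Finset.univ a (fun i => r.eval (a i)) :=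
    Lagrange.eq_interpolate (Set.injOn_of_injective hinj) hcard
  -- integral of r
  have hintr : ∫ t in (0:ℝ)..1, r.eval t = ∑ j, R j * r.eval (a j) := by
    conv_lhs => rw [hinterp]
    have : ∀ t : ℝ, (Lagrange.interpolate Finset.univ a (fun i => r.eval (a i))).eval t
        = ∑ j, r.eval (a j) * (Lagrange.basis Finset.univ a j).eval t := by
      intro t
      rw [Lagrange.interpolate_apply, Polynomial.eval_finset_sum]
      simp
    simp only [this]
    rw [intervalIntegral.integral_finset_sum]
    · refine Finset.sum_congr rfl fun j _ => ?_
      rw [intervalIntegral.integral_const_mul, mul_comm, hR j]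
      congr 1
      refine intervalIntegral.integral_congr fun t _ => ?_
      exact gq_basis_eval n a j t
    · intro j _
      exact (Continuous.intervalIntegrable (by fun_prop) _ _)
  -- integral of p
  have hintp : ∫ t in (0:ℝ)..1, p.eval t = ∫ t in (0:ℝ)..1, r.eval t := by
    rw [← hpdecomp]
    have : ∀ t : ℝ, (r + T * q).eval t = r.eval t + q.eval t * T.eval t := by
      intro t; simp [mul_comm]
    simp only [this]
    rw [intervalIntegral.integral_add (Continuous.intervalIntegrable (by fun_prop) _ _)
      (Continuous.intervalIntegrable (by fun_prop) _ _),
      gq_orth n T horth q hqdeg, add_zero]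
  rw [hintp, hintr]
  simp only [hval]
end

section
/- Let n ∈ ℕ and let T be a monic real polynomial of degree n+1 such that ∫₀¹ T(t) · q(t) dt = 0 for every real polynomial q of degree at most n. Then T has n+1 distinct real roots, all of which lie in the open interval (0,1). -/
open Polynomial intervalIntegral

lemma exists_odd_rootMultiplicity (N : ℕ) :
    ∀ f : Polynomial ℝ, f.natDegree ≤ N → ∀ x y : ℝ, x < y →
    f.eval x < 0 → 0 < f.eval y →
    ∃ r ∈ Set.Ioo x y, Odd (rootMultiplicity r f) := by
  induction N with
  | zero =>
    intro f hfd x y hxy hx hy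
    obtain ⟨c, rfl⟩ := natDegree_eq_zero.mp (Nat.le_zero.mp hfd)
    simp only [eval_C] at hx hy; linarith
  | succ N ih =>
    intro f hfd x y hxy hx hy
    have hf0 : f ≠ 0 := by intro h; simp [h] at hy
    have hcont : Continuous fun t => f.eval t := f.continuous
    obtain ⟨r, hr, hr0⟩ : ∃ r ∈ Set.Ioo x y, f.eval r = 0 := by
      have h0 : (0:ℝ) ∈ Set.Ioo (f.eval x) (f.eval y) := ⟨hx, hy⟩
      obtain ⟨r, hrmem, hre⟩ := intermediate_value_Ioo hxy.le hcont.continuousOn h0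
      exact ⟨r, hrmem, hre⟩
    set m := rootMultiplicity r f with hm_def
    by_cases hm : Odd m
    · exact ⟨r, hr, hm⟩
    have hmeven : Even m := Nat.not_odd_iff_even.mp hm
    set h := f /ₘ (X - C r) ^ m with hh
    have hfeq : (X - C r) ^ m * h = f := pow_mul_divByMonic_rootMultiplicity_eq f r
    have hhr : h.eval r ≠ 0 := eval_divByMonic_pow_rootMultiplicity_ne_zero r hf0
    have hm1 : 1 ≤ m := (rootMultiplicity_pos hf0).mpr hr0
    have hh0 : h ≠ 0 := fun hz => hhr (by simp [hz])
    have hdeg : m + h.natDegree = f.natDegree := by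
      conv_rhs => rw [← hfeq]
      rw [natDegree_mul (pow_ne_zero m (X_sub_C_ne_zero r)) hh0, natDegree_pow,
        natDegree_X_sub_C, mul_one]
    have hdh : h.natDegree ≤ N := by omega
    have hpow : ∀ t : ℝ, t ≠ r → 0 < ((X - C r) ^ m).eval t := by
      intro t ht
      rw [eval_pow, eval_sub, eval_X, eval_C]
      exact hmeven.pow_pos (sub_ne_zero.mpr ht)
    have hfx := congrArg (Polynomial.eval x) hfeq
    have hfy := congrArg (Polynomial.eval y) hfeq
    rw [eval_mul] at hfx hfy
    have hpx := hpow x (by intro he; exact absurd he.symm (ne_of_gt hr.1))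
    have hpy := hpow y (by intro he; exact absurd he.symm (ne_of_lt hr.2))
    have hhx : h.eval x < 0 := by nlinarith
    have hhy : 0 < h.eval y := by nlinarith
    obtain ⟨r', hr', hodd⟩ := ih h hdh x y hxy hhx hhy
    have hrr' : r' ≠ r := by
      intro he
      rw [he, rootMultiplicity_eq_zero hhr] at hodd
      exact (Nat.not_odd_iff_even.mpr Even.zero) hodd
    refine ⟨r', hr', ?_⟩
    rw [← hfeq, rootMultiplicity_mul (by rw [hfeq]; exact hf0),
      rootMultiplicity_eq_zero (p := (X - C r) ^ m) (by
        simp only [IsRoot, eval_pow, eval_sub, eval_X, eval_C]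
        exact pow_ne_zero _ (sub_ne_zero.mpr hrr'))]
    simpa using hodd

lemma rootMultiplicity_neg' (f : Polynomial ℝ) (hf : f ≠ 0) (r : ℝ) :
    rootMultiplicity r (-f) = rootMultiplicity r f := by
  have h1 : (-f : Polynomial ℝ) = (-1) * f := by ring
  rw [h1, rootMultiplicity_mul (by rw [← h1]; exact neg_ne_zero.mpr hf)]
  have : rootMultiplicity r (-1 : Polynomial ℝ) = 0 := by
    apply rootMultiplicity_eq_zero
    simp [IsRoot]
  omega

/-- The monic polynomial of degree `n+1` orthogonal on `[0,1]` to all polynomials of degree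
at most `n` has `n+1` pairwise distinct real roots, all lying in the open interval `(0,1)`. -/
theorem orthogonal_polynomial_roots_distinct_in_Ioo (n : ℕ) (T : Polynomial ℝ)
    (hT : T.Monic) (hdeg : T.natDegree = n + 1)
    (horth : ∀ q : Polynomial ℝ, q.degree ≤ (n : ℕ) →
      ∫ t in (0:ℝ)..1, T.eval t * q.eval t = 0) :
    ∃ a : Fin (n + 1) → ℝ, Function.Injective a ∧
      ∀ j, a j ∈ Set.Ioo (0:ℝ) 1 ∧ T.eval (a j) = 0 := by
  classical
  have hT0 : T ≠ 0 := hT.ne_zero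
  set R : Finset ℝ := T.roots.toFinset.filter
    (fun x => x ∈ Set.Ioo (0:ℝ) 1 ∧ Odd (rootMultiplicity x T)) with hR
  by_cases hcard : n + 1 ≤ R.card
  · obtain ⟨S, hSR, hScard⟩ := Finset.exists_subset_card_eq hcard
    refine ⟨fun j => S.orderEmbOfFin hScard j, fun i j hij => by
      simpa using (S.orderEmbOfFin hScard).injective hij, fun j => ?_⟩
    have hmem : S.orderEmbOfFin hScard j ∈ S := Finset.orderEmbOfFin_mem S hScard j
    have hmemR := hSR hmem
    rw [hR, Finset.mem_filter, Multiset.mem_toFinset, mem_roots hT0] at hmemR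
    exact ⟨hmemR.2.1, hmemR.1⟩
  · exfalso
    push_neg at hcard
    set q : Polynomial ℝ := ∏ x ∈ R, (X - C x) with hq
    have hqm : q.Monic := monic_prod_of_monic _ _ (fun x _ => monic_X_sub_C x)
    have hq0 : q ≠ 0 := hqm.ne_zero
    have hqnat : q.natDegree = R.card := by
      rw [hq, natDegree_prod _ _ (fun x _ => X_sub_C_ne_zero x)]
      simp [natDegree_X_sub_C]
    have hqdeg : q.degree ≤ (n : ℕ) := by
      rw [degree_eq_natDegree hq0, hqnat]
      exact_mod_cast Nat.lt_succ_iff.mp hcard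
    have hint := horth q hqdeg
    set f := T * q with hf
    have hfm : f.Monic := hT.mul hqm
    have hf0 : f ≠ 0 := hfm.ne_zero
    have hfint : ∫ t in (0:ℝ)..1, f.eval t = 0 := by
      rw [← hint]; congr 1; ext t; rw [hf, eval_mul]
    -- every root of f in (0,1) has even multiplicity
    have heven : ∀ r ∈ Set.Ioo (0:ℝ) 1, Even (rootMultiplicity r f) := by
      intro r hrIoo
      rw [hf, rootMultiplicity_mul (by rw [← hf]; exact hf0)]
      have hqmult : rootMultiplicity r q = if r ∈ R then 1 else 0 := by
        rw [← count_roots, hq, roots_prod_X_sub_C]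
        split
        · next h => exact Multiset.count_eq_one_of_mem R.nodup h
        · next h => exact Multiset.count_eq_zero.mpr (by simpa using h)
      by_cases hodd : Odd (rootMultiplicity r T)
      · have hrR : r ∈ R := by
          rw [hR, Finset.mem_filter, Multiset.mem_toFinset, mem_roots hT0]
          refine ⟨(rootMultiplicity_pos hT0).mp ?_, hrIoo, hodd⟩
          rcases hodd with ⟨k, hk⟩; omega
        rw [hqmult, if_pos hrR]
        exact Odd.add_one hodd
      · have hTeven : Even (rootMultiplicity r T) := Nat.not_odd_iff_even.mp hodd
        have hrR : r ∉ R := by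
          rw [hR, Finset.mem_filter]
          rintro ⟨-, -, h⟩; exact hodd h
        rw [hqmult, if_neg hrR]
        simpa using hTeven
    -- f does not change sign on (0,1)
    have hnosign : (∀ t ∈ Set.Ioo (0:ℝ) 1, 0 ≤ f.eval t) ∨
        (∀ t ∈ Set.Ioo (0:ℝ) 1, f.eval t ≤ 0) := by
      by_contra hc
      push_neg at hc
      obtain ⟨⟨x, hx, hxneg⟩, ⟨y, hy, hypos⟩⟩ := hc

      rcases lt_trichotomy x y with h | h | h
      · obtain ⟨r, hrm, hro⟩ :=
          exists_odd_rootMultiplicity f.natDegree f le_rfl x y h hxneg hypos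
        exact (Nat.not_odd_iff_even.mpr
          (heven r ⟨hx.1.trans hrm.1, hrm.2.trans hy.2⟩)) hro
      · subst h; linarith
      · obtain ⟨r, hrm, hro⟩ :=
          exists_odd_rootMultiplicity (-f).natDegree (-f) le_rfl y x h
            (by simpa using hypos) (by simpa using hxneg)
        rw [rootMultiplicity_neg' f hf0] at hro
        exact (Nat.not_odd_iff_even.mpr
          (heven r ⟨hy.1.trans hrm.1, hrm.2.trans hx.2⟩)) hro
    -- pick g = ±f, nonneg on (0,1), with zero integral
    obtain ⟨g, hg0, hgnn, hgint⟩ : ∃ g : Polynomial ℝ, g ≠ 0 ∧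
        (∀ t ∈ Set.Ioo (0:ℝ) 1, 0 ≤ g.eval t) ∧ (∫ t in (0:ℝ)..1, g.eval t) = 0 := by
      rcases hnosign with h | h
      · exact ⟨f, hf0, h, hfint⟩
      · refine ⟨-f, neg_ne_zero.mpr hf0, fun t ht => by simpa using h t ht, ?_⟩
        simp only [eval_neg]
        rw [intervalIntegral.integral_neg, hfint, neg_zero]
    -- nonneg extends to the closed interval
    have hgcont : Continuous fun t => g.eval t := g.continuous
    have hgnn' : ∀ t ∈ Set.Icc (0:ℝ) 1, 0 ≤ g.eval t := by
      have hcl : closure (Set.Ioo (0:ℝ) 1) = Set.Icc 0 1 := closure_Ioo (by norm_num)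
      intro t ht
      exact le_on_closure (f := fun _ => (0:ℝ)) (g := fun t => g.eval t) hgnn
        continuousOn_const hgcont.continuousOn (by rwa [hcl])
    -- g is positive somewhere in (0,1)
    obtain ⟨c, hcIoo, hcne⟩ : ∃ c ∈ Set.Ioo (0:ℝ) 1, g.eval c ≠ 0 := by
      have hinf : (Set.Ioo (0:ℝ) 1).Infinite := Set.Ioo_infinite (by norm_num : (0:ℝ) < 1)
      obtain ⟨c, hc1, hc2⟩ := hinf.exists_notMem_finset g.roots.toFinset
      refine ⟨c, hc1, fun he => hc2 ?_⟩
      rw [Multiset.mem_toFinset, mem_roots hg0]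
      exact he
    have : (0:ℝ) < ∫ t in (0:ℝ)..1, g.eval t := by
      apply intervalIntegral.integral_pos zero_lt_one hgcont.continuousOn
      · intro t ht; exact hgnn' t ⟨ht.1.le, ht.2⟩
      · exact ⟨c, ⟨hcIoo.1.le, hcIoo.2.le⟩, lt_of_le_of_ne (hgnn c hcIoo) (Ne.symm hcne)⟩
    rw [hgint] at this
    exact lt_irrefl 0 this
end

section
/- Let n ∈ ℕ and let P be the real polynomial obtained as the (n+1)-st derivative of (X² − 1)^{n+1}. Then ∫_{−1}^{1} P(x) · q(x) dx = 0 for every real polynomial q of degree at most n. -/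
open Polynomial intervalIntegral

lemma poly_ibp (p q : Polynomial ℝ) :
    ∫ x in (-1:ℝ)..1, (derivative p).eval x * q.eval x
      = p.eval 1 * q.eval 1 - p.eval (-1) * q.eval (-1)
        - ∫ x in (-1:ℝ)..1, p.eval x * (derivative q).eval x := by
  have h : ∫ x in (-1:ℝ)..1, ((p * q).derivative).eval x
      = (p * q).eval 1 - (p * q).eval (-1) := by
    apply intervalIntegral.integral_deriv_eq_sub' (fun x => (p*q).eval x)
    · funext x; exact Polynomial.deriv (p := p*q)
    · intro x _; exact (p * q).differentiableAt
    · exact ((p * q).derivative.continuous).continuousOn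
  have h2 : ∫ x in (-1:ℝ)..1, ((p * q).derivative).eval x
      = (∫ x in (-1:ℝ)..1, (derivative p).eval x * q.eval x)
        + ∫ x in (-1:ℝ)..1, p.eval x * (derivative q).eval x := by
    rw [← intervalIntegral.integral_add (f := fun x => (derivative p).eval x * q.eval x)
      (g := fun x => p.eval x * (derivative q).eval x)
      ((Polynomial.continuous _ |>.mul (Polynomial.continuous _)).intervalIntegrable _ _)
      ((Polynomial.continuous _ |>.mul (Polynomial.continuous _)).intervalIntegrable _ _)]
    simp [derivative_mul]
  rw [h2] at h
  simp only [eval_mul] at h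
  linarith

lemma aux (W : Polynomial ℝ) : ∀ k (q : Polynomial ℝ),
    (∀ j ≤ k, (derivative^[j] W).eval 1 = 0 ∧ (derivative^[j] W).eval (-1) = 0) →
    q.natDegree ≤ k →
    ∫ x in (-1:ℝ)..1, (derivative^[k+1] W).eval x * q.eval x = 0 := by
  intro k
  induction k with
  | zero =>
    intro q hvan hdeg
    have hq : derivative q = 0 := by
      rw [Polynomial.eq_C_of_natDegree_le_zero hdeg]; simp
    have h1 : W.eval 1 = 0 := by simpa using (hvan 0 le_rfl).1
    have h2 : W.eval (-1) = 0 := by simpa using (hvan 0 le_rfl).2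
    rw [Function.iterate_one, poly_ibp, h1, h2, hq]
    simp
  | succ k ih =>
    intro q hvan hdeg
    have hstep : derivative^[k+1+1] W = derivative (derivative^[k+1] W) := by
      rw [Function.iterate_succ_apply']
    rw [hstep, poly_ibp, (hvan (k+1) le_rfl).1, (hvan (k+1) le_rfl).2,
      ih (derivative q) (fun j hj => hvan j (hj.trans (Nat.le_succ _)))
        (le_trans (q.natDegree_derivative_le) (by omega))]
    simp

/-- Rodrigues' formula orthogonality: the `(n+1)`-st derivative of `(X² − 1)^{n+1}` is
orthogonal on `[−1,1]` to every polynomial of degree at most `n`. -/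
theorem rodrigues_orthogonality (n : ℕ) (q : Polynomial ℝ) (hq : q.degree ≤ (n : ℕ)) :
    ∫ x in (-1:ℝ)..1,
      (Polynomial.derivative^[n + 1] ((X ^ 2 - 1 : Polynomial ℝ) ^ (n + 1))).eval x
        * q.eval x = 0 := by
  apply aux
  · intro j hj
    obtain ⟨r, hr⟩ := Polynomial.pow_sub_dvd_iterate_derivative_pow (X ^ 2 - 1 : Polynomial ℝ) (n+1) j
    rw [hr]
    have he : (n + 1 - j) ≠ 0 := by omega
    constructor <;> simp [eval_pow, zero_pow he]
  · exact Polynomial.natDegree_le_iff_degree_le.mpr hq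
end

section
/- Let T be a monic real polynomial of degree n+1 whose roots all lie in [0,1). Then (i) there is a unique real polynomial P such that T(t)·log(t/(t−1)) − P(t) → 0 as t → +∞, namely P(x) = ∫₀¹ (T(x) − T(τ))/(x − τ) dτ (the integrand being the polynomial in x and τ obtained from the difference quotient), and (ii) for every root a of T one has ∫₀¹ S_a(t) dt = P(a), where S_a is the polynomial quotient of T by (X − a). -/
open Polynomial intervalIntegral Filter

/-- The difference-quotient polynomial `(T(X) - T(s))/(X - s)` given explicitly. -/
noncomputable def gaussDq (T : Polynomial ℝ) (s : ℝ) : Polynomial ℝ :=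
  ∑ j ∈ Finset.range (T.natDegree + 1),
    C (T.coeff j) * ∑ i ∈ Finset.range j, X ^ i * C s ^ (j - 1 - i)

lemma gaussDq_mul (T : Polynomial ℝ) (s : ℝ) :
    gaussDq T s * (X - C s) = T - C (T.eval s) := by
  rw [gaussDq, Finset.sum_mul]
  have h : ∀ j, (C (T.coeff j) * ∑ i ∈ Finset.range j, X ^ i * C s ^ (j - 1 - i)) * (X - C s)
      = C (T.coeff j) * X ^ j - C (T.coeff j) * C s ^ j := by
    intro j
    rw [mul_assoc, geom_sum₂_mul, mul_sub]
  simp only [h]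
  rw [Finset.sum_sub_distrib]
  congr 1
  · conv_rhs => rw [T.as_sum_range' (T.natDegree + 1) (Nat.lt_succ_self _)]
    simp [Polynomial.C_mul_X_pow_eq_monomial]
  · rw [Polynomial.eval_eq_sum_range, map_sum]
    exact Finset.sum_congr rfl fun j _ => by rw [map_mul, map_pow]

lemma gaussDq_eval (T : Polynomial ℝ) (s t : ℝ) :
    (gaussDq T s).eval t
      = ∑ j ∈ Finset.range (T.natDegree + 1),
          T.coeff j * ∑ i ∈ Finset.range j, t ^ i * s ^ (j - 1 - i) := by
  simp [gaussDq, Polynomial.eval_finset_sum]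

lemma gaussDq_symm (T : Polynomial ℝ) (s t : ℝ) :
    (gaussDq T s).eval t = (gaussDq T t).eval s := by
  simp only [gaussDq_eval]
  refine Finset.sum_congr rfl fun j _ => ?_
  congr 1
  rw [← Finset.sum_range_reflect]
  refine Finset.sum_congr rfl fun i hi => ?_
  have hi' : i ≤ j - 1 := Nat.le_sub_one_of_lt (Finset.mem_range.mp hi)
  rw [Nat.sub_sub_self hi']
  ring

lemma gaussDq_eq_divByMonic (T : Polynomial ℝ) (s : ℝ) :
    (T - C (T.eval s)) /ₘ (X - C s) = gaussDq T s := by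
  have h0 : (T - C (T.eval s)) %ₘ (X - C s) = 0 := by
    rw [Polynomial.modByMonic_X_sub_C_eq_C_eval]
    simp
  have h1 := Polynomial.modByMonic_add_div (T - C (T.eval s)) (X - C s)
  rw [h0, zero_add] at h1
  have h2 : (X - C s) * gaussDq T s = T - C (T.eval s) := by
    rw [mul_comm]; exact gaussDq_mul T s
  exact mul_left_cancel₀ (Polynomial.X_sub_C_ne_zero s) (h1.trans h2.symm)

lemma gaussDq_eval_of_ne (T : Polynomial ℝ) {s t : ℝ} (h : t - s ≠ 0) :
    (gaussDq T s).eval t = (T.eval t - T.eval s) * (t - s)⁻¹ := by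
  have h1 := congrArg (Polynomial.eval t) (gaussDq_mul T s)
  simp only [Polynomial.eval_mul, Polynomial.eval_sub, Polynomial.eval_X,
    Polynomial.eval_C] at h1
  field_simp
  linarith [h1]

/-- Gauss's polynomial `P(x) = ∫₀¹ (T(x)-T(τ))/(x-τ) dτ`, given explicitly. -/
noncomputable def gaussP (T : Polynomial ℝ) : Polynomial ℝ :=
  ∑ j ∈ Finset.range (T.natDegree + 1),
    C (T.coeff j) * ∑ i ∈ Finset.range j, C (((j - 1 - i : ℕ) + 1 : ℝ))⁻¹ * X ^ i

lemma gaussP_eval (T : Polynomial ℝ) (x : ℝ) :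
    (gaussP T).eval x = ∫ s in (0:ℝ)..1, (gaussDq T s).eval x := by
  simp only [gaussDq_eval]
  rw [intervalIntegral.integral_finset_sum (fun j _ => (Continuous.intervalIntegrable (by fun_prop) _ _))]
  simp only [intervalIntegral.integral_const_mul]
  rw [gaussP]
  simp only [Polynomial.eval_finset_sum, Polynomial.eval_mul, Polynomial.eval_C,
    Polynomial.eval_pow, Polynomial.eval_X]
  refine Finset.sum_congr rfl fun j _ => ?_
  congr 1
  rw [intervalIntegral.integral_finset_sum (fun i _ => (Continuous.intervalIntegrable (by fun_prop) _ _))]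
  refine Finset.sum_congr rfl fun i _ => ?_
  rw [intervalIntegral.integral_const_mul, integral_pow]
  rw [one_pow, zero_pow (Nat.succ_ne_zero _), sub_zero]
  rw [one_div]
  ring

lemma gauss_poly_eq_zero {Q : Polynomial ℝ}
    (h : Tendsto (fun t => Q.eval t) atTop (nhds 0)) : Q = 0 := by
  by_cases hd : 0 < Q.degree
  · have h1 := Polynomial.abs_tendsto_atTop Q hd
    have h2 : Tendsto (fun t => |Q.eval t|) atTop (nhds |0|) := h.abs
    exact absurd h2 (not_tendsto_nhds_of_tendsto_atTop h1 _)
  · have hc := Polynomial.eq_C_of_degree_le_zero (not_lt.mp hd)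
    rw [hc] at h
    simp only [Polynomial.eval_C] at h
    have := tendsto_nhds_unique h tendsto_const_nhds
    rw [hc, ← this, map_zero]

lemma gauss_tendsto (T : Polynomial ℝ) :
    Tendsto (fun t : ℝ => T.eval t * Real.log (t / (t - 1)) - (gaussP T).eval t)
      atTop (nhds 0) := by
  obtain ⟨M, hM⟩ := (isCompact_Icc (a := (0:ℝ)) (b := 1)).exists_bound_of_continuousOn
    (fun τ _ => ((T.continuous_aeval).continuousAt (x := τ)).continuousWithinAt)
  have hM' : ∀ τ ∈ Set.Icc (0:ℝ) 1, |T.eval τ| ≤ M := by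
    intro τ hτ
    simpa using hM τ hτ
  have hM0 : 0 ≤ M := le_trans (abs_nonneg _) (hM' 0 ⟨le_rfl, zero_le_one⟩)
  have key : ∀ t : ℝ, 1 < t →
      T.eval t * Real.log (t / (t - 1)) - (gaussP T).eval t
        = ∫ τ in (0:ℝ)..1, T.eval τ * (t - τ)⁻¹ := by
    intro t ht
    have htτ : ∀ τ ∈ Set.uIcc (0:ℝ) 1, t - τ ≠ 0 := by
      intro τ hτ
      rw [Set.uIcc_of_le zero_le_one] at hτ
      have := hτ.2; intro hz; linarith [sub_eq_zero.mp hz]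
    have hlog : Real.log (t / (t - 1)) = ∫ τ in (0:ℝ)..1, (t - τ)⁻¹ := by
      rw [intervalIntegral.integral_comp_sub_left (fun x => x⁻¹) t,
        integral_inv_of_pos (by linarith) (by linarith), sub_zero]
    have hcont1 : ContinuousOn (fun τ : ℝ => (t - τ)⁻¹) (Set.uIcc 0 1) :=
      ((continuous_const.sub continuous_id).continuousOn).inv₀ htτ
    have hint1 : IntervalIntegrable (fun τ : ℝ => T.eval t * (t - τ)⁻¹)
        MeasureTheory.volume 0 1 :=
      (hcont1.const_smul (T.eval t)).intervalIntegrable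
    have hint2 : IntervalIntegrable (fun τ : ℝ => (T.eval t - T.eval τ) * (t - τ)⁻¹)
        MeasureTheory.volume 0 1 := by
      apply ContinuousOn.intervalIntegrable
      exact ((continuous_const.sub T.continuous_aeval).continuousOn).mul hcont1
    have h1 : T.eval t * Real.log (t / (t - 1)) = ∫ τ in (0:ℝ)..1, T.eval t * (t - τ)⁻¹ := by
      rw [hlog, intervalIntegral.integral_const_mul]
    have h2 : (gaussP T).eval t = ∫ τ in (0:ℝ)..1, (T.eval t - T.eval τ) * (t - τ)⁻¹ := by
      rw [gaussP_eval]
      apply intervalIntegral.integral_congr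
      intro τ hτ
      exact gaussDq_eval_of_ne T (htτ τ hτ)
    rw [h1, h2, ← intervalIntegral.integral_sub hint1 hint2]
    apply intervalIntegral.integral_congr
    intro τ hτ
    have hne := htτ τ hτ
    field_simp
    ring
  have hb : ∀ᶠ t : ℝ in atTop,
      ‖T.eval t * Real.log (t / (t - 1)) - (gaussP T).eval t‖ ≤ M * (t - 1)⁻¹ := by
    filter_upwards [eventually_gt_atTop (1:ℝ)] with t ht
    rw [key t ht]
    have hle := intervalIntegral.norm_integral_le_of_norm_le_const
      (C := M * (t - 1)⁻¹) (f := fun τ : ℝ => T.eval τ * (t - τ)⁻¹) (a := 0) (b := 1) ?_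
    · simpa using hle
    · intro x hx
      rw [Set.uIoc_of_le zero_le_one] at hx
      have h1 : |T.eval x| ≤ M := hM' x ⟨hx.1.le, hx.2⟩
      have hpos : (0:ℝ) < t - x := by linarith [hx.2]
      have h2 : (t - x)⁻¹ ≤ (t - 1)⁻¹ := by
        apply inv_anti₀ (by linarith) (by linarith [hx.2])
      rw [Real.norm_eq_abs, abs_mul, abs_of_pos (inv_pos.mpr hpos)]
      exact mul_le_mul h1 h2 (inv_pos.mpr hpos).le hM0
  apply squeeze_zero_norm' hb
  have h3 : Tendsto (fun t : ℝ => (t - 1)⁻¹) atTop (nhds 0) :=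
    (tendsto_atTop_add_const_right _ (-1 : ℝ) tendsto_id).inv_tendsto_atTop
  simpa using h3.const_mul M

/-- Gauss's polynomial `T′`: for a monic `T` of degree `n+1` with all roots in `[0,1)`,
(i) there is a unique polynomial `P` with `T(t)·log(t/(t−1)) − P(t) → 0` as `t → +∞`,
namely `P(x) = ∫₀¹ (T(x) − T(τ))/(x − τ) dτ` (difference-quotient polynomial), and
(ii) for every root `a` of `T`, `∫₀¹ (T/(X − a))(t) dt = P(a)`. -/
theorem gauss_T_prime (n : ℕ) (T : Polynomial ℝ) (hT : T.Monic)
    (hdeg : T.natDegree = n + 1)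
    (hroots : ∀ z : ℝ, T.eval z = 0 → z ∈ Set.Ico (0:ℝ) 1) :
    (∃! P : Polynomial ℝ,
      Tendsto (fun t : ℝ => T.eval t * Real.log (t / (t - 1)) - P.eval t) atTop (nhds 0)) ∧
    ∀ P : Polynomial ℝ,
      Tendsto (fun t : ℝ => T.eval t * Real.log (t / (t - 1)) - P.eval t) atTop (nhds 0) →
        (∀ x : ℝ,
          P.eval x = ∫ τ in (0:ℝ)..1, ((T - C (T.eval τ)) /ₘ (X - C τ)).eval x) ∧
        (∀ a : ℝ, T.eval a = 0 →
          (∫ t in (0:ℝ)..1, (T /ₘ (X - C a)).eval t) = P.eval a) := by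
  have hPtend := gauss_tendsto T
  have huniq : ∀ Q : Polynomial ℝ,
      Tendsto (fun t : ℝ => T.eval t * Real.log (t / (t - 1)) - Q.eval t) atTop (nhds 0) →
      Q = gaussP T := by
    intro Q hQ
    have h1 : Tendsto (fun t : ℝ => (Q - gaussP T).eval t) atTop (nhds 0) := by
      have h2 := hPtend.sub hQ
      rw [sub_zero] at h2
      refine h2.congr fun t => ?_
      simp only [Polynomial.eval_sub]
      ring
    have := gauss_poly_eq_zero h1
    exact sub_eq_zero.mp this
  refine ⟨⟨gaussP T, hPtend, huniq⟩, ?_⟩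
  intro P hP
  obtain rfl := huniq P hP
  constructor
  · intro x
    rw [gaussP_eval]
    simp only [gaussDq_eq_divByMonic]
  · intro a ha
    have hTa : T /ₘ (X - C a) = gaussDq T a := by
      have h := gaussDq_eq_divByMonic T a
      rwa [ha, map_zero, sub_zero] at h
    rw [hTa, gaussP_eval]
    apply intervalIntegral.integral_congr
    intro t _
    exact gaussDq_symm T a t
end

section
/- Let n ∈ ℕ, let a₀, ..., aₙ be pairwise distinct real numbers in [0,1] with node polynomial T(t) = ∏_{j=0}^{n}(t − a_j), and let R_j = ∫₀¹ ∏_{i ≠ j} (t − a_i)/(a_j − a_i) dt be the interpolatory weights. Define the error moments k^{(m)} = ∫₀¹ t^m dt − Σ_{j=0}^{n} R_j · a_j^m for m ∈ ℕ. Then for every real t > 1 the series Σ_{m=0}^{∞} k^{(m)} · t^{−(m+1)} converges and equals (∫₀¹ T(τ)/(t − τ) dτ) / T(t). -/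
open Polynomial intervalIntegral MeasureTheory

/-- The generating function of the error moments of the interpolatory rule is `Θ = T″/T`:
for `t > 1`, `Σ_m k^{(m)} t^{−(m+1)}` converges to `(∫₀¹ T(τ)/(t − τ) dτ) / T(t)`. -/
theorem error_moment_generating_function (n : ℕ) (a : Fin (n + 1) → ℝ)
    (hinj : Function.Injective a) (hmem : ∀ j, a j ∈ Set.Icc (0:ℝ) 1)
    (T : Polynomial ℝ) (hT : T = ∏ j, (X - C (a j)))
    (R : Fin (n + 1) → ℝ)
    (hR : ∀ j, R j = ∫ t in (0:ℝ)..1, ∏ i ∈ Finset.univ.erase j, (t - a i) / (a j - a i))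
    (k : ℕ → ℝ)
    (hk : ∀ m, k m = (∫ t in (0:ℝ)..1, t ^ m) - ∑ j, R j * a j ^ m)
    (t : ℝ) (ht : 1 < t) :
    Summable (fun m : ℕ => k m * t ^ (-(m + 1 : ℤ))) ∧
    ∑' m : ℕ, k m * t ^ (-(m + 1 : ℤ))
      = (∫ τ in (0:ℝ)..1, T.eval τ / (t - τ)) / T.eval t := by
  have h01 : (0:ℝ) ≤ 1 := zero_le_one
  have ht0 : (0:ℝ) < t := lt_trans one_pos ht
  have hta : ∀ j, 0 < t - a j := fun j => by have := (hmem j).2; linarith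
  have hTroot : ∀ j, T.eval (a j) = 0 := by
    intro j; rw [hT, eval_prod]
    exact Finset.prod_eq_zero (Finset.mem_univ j) (by simp)
  have hTt : 0 < T.eval t := by
    rw [hT, eval_prod]
    exact Finset.prod_pos fun j _ => by simpa using hta j
  have hTt' : T.eval t ≠ 0 := ne_of_gt hTt
  -- the divided-difference polynomial q
  obtain ⟨q, hq⟩ := Polynomial.X_sub_C_dvd_sub_C_eval (a := t) (p := T)
  have hqev : ∀ τ : ℝ, (τ - t) * q.eval τ = T.eval τ - T.eval t := by
    intro τ
    have := congrArg (Polynomial.eval τ) hq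
    simpa using this.symm
  have hqa : ∀ j, q.eval (a j) * (t - a j) = T.eval t := by
    intro j
    have h := hqev (a j)
    rw [hTroot j] at h
    linear_combination -h
  have hTdeg : T.natDegree = n + 1 := by
    rw [hT, natDegree_prod _ _ (fun j _ => X_sub_C_ne_zero (a j))]
    simp
  have hq0 : q ≠ 0 := by
    intro h0
    rw [h0, mul_zero, sub_eq_zero] at hq
    have := congrArg natDegree hq
    rw [hTdeg, natDegree_C] at this
    exact Nat.succ_ne_zero n this
  have hqdeg : q.degree < ((n + 1 : ℕ) : WithBot ℕ) := by
    have h1 : (T - C (T.eval t)).natDegree = n + 1 := by rw [natDegree_sub_C, hTdeg]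
    rw [hq, natDegree_mul (X_sub_C_ne_zero t) hq0, natDegree_X_sub_C] at h1
    have hqn : q.natDegree = n := by omega
    calc q.degree ≤ (q.natDegree : WithBot ℕ) := degree_le_natDegree
    _ < ((n + 1 : ℕ) : WithBot ℕ) := by rw [hqn]; exact_mod_cast Nat.lt_succ_self n
  -- the weights are integrals of the Lagrange basis polynomials
  have hbasisR : ∀ j, R j = ∫ τ in (0:ℝ)..1, (Lagrange.basis Finset.univ a j).eval τ := by
    intro j
    rw [hR j]
    apply _root_.intervalIntegral.integral_congr
    intro τ _
    simp [Lagrange.basis, Lagrange.basisDivisor, eval_prod, div_eq_inv_mul]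
  -- exactness of the interpolatory rule on polynomials of degree ≤ n
  have exact : ∀ p : Polynomial ℝ, p.degree < ((n + 1 : ℕ) : WithBot ℕ) →
      (∫ τ in (0:ℝ)..1, p.eval τ) = ∑ j, R j * p.eval (a j) := by
    intro p hp
    have hcard : (Finset.univ : Finset (Fin (n + 1))).card = n + 1 := by simp
    have hrepr := Lagrange.eq_interpolate (v := a) (hinj.injOn) (by rw [hcard]; exact hp)
    have heval : ∀ τ : ℝ, p.eval τ
        = ∑ j, p.eval (a j) * (Lagrange.basis Finset.univ a j).eval τ := by
      intro τ
      conv_lhs => rw [hrepr]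
      simp [Lagrange.interpolate_apply, eval_finset_sum]
    rw [_root_.intervalIntegral.integral_congr (g := fun τ =>
        ∑ j, p.eval (a j) * (Lagrange.basis Finset.univ a j).eval τ) (fun τ _ => heval τ),
      _root_.intervalIntegral.integral_finset_sum (fun j _ =>
        (Continuous.intervalIntegrable (u := fun τ => p.eval (a j) * (Lagrange.basis Finset.univ a j).eval τ) (continuous_const.mul (Polynomial.continuous _)) _ _))]
    refine Finset.sum_congr rfl fun j _ => ?_
    rw [_root_.intervalIntegral.integral_const_mul, ← hbasisR j, mul_comm]
  -- geometric series
  set c : ℕ → ℝ := fun m => (t ^ (m + 1))⁻¹ with hc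
  have hcpos : ∀ m, 0 < c m := fun m => inv_pos.2 (pow_pos ht0 _)
  have hzc : ∀ m : ℕ, t ^ (-(m + 1 : ℤ)) = c m := by
    intro m
    rw [show (-(m + 1 : ℤ)) = (-((m + 1 : ℕ) : ℤ)) by push_cast; ring, zpow_neg, zpow_natCast]
  have hgeom : ∀ x : ℝ, 0 ≤ x → x ≤ 1 → HasSum (fun m => x ^ m * c m) (t - x)⁻¹ := by
    intro x hx0 hx1
    have hxt : x / t < 1 := (div_lt_one ht0).2 (lt_of_le_of_lt hx1 ht)
    have h := (hasSum_geometric_of_lt_one (div_nonneg hx0 ht0.le) hxt).mul_right t⁻¹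
    have e1 : ∀ m : ℕ, (x / t) ^ m * t⁻¹ = x ^ m * c m := by
      intro m
      rw [div_pow, hc]
      simp only []
      rw [pow_succ, mul_inv]
      ring
    have e2 : (1 - x / t)⁻¹ * t⁻¹ = (t - x)⁻¹ := by
      rw [← mul_inv]
      congr 1
      field_simp
    simpa only [e1, e2] using h
  have hsummc : Summable c := by
    have h := (summable_geometric_of_lt_one (inv_nonneg.2 ht0.le)
      (inv_lt_one_of_one_lt₀ ht)).mul_left t⁻¹
    refine h.congr fun m => ?_
    rw [hc]
    simp only []
    rw [← inv_pow, pow_succ']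
  -- Part A : interchanging sum and integral
  have hFint : ∀ m : ℕ, Integrable (fun τ : ℝ => τ ^ m * c m)
      (volume.restrict (Set.Ioc (0:ℝ) 1)) := fun m =>
    Continuous.integrableOn_Ioc ((continuous_pow m).mul continuous_const)
  have hnormint : ∀ m : ℕ, (∫ τ in Set.Ioc (0:ℝ) 1, ‖τ ^ m * c m‖) = (1 / (m + 1)) * c m := by
    intro m
    rw [setIntegral_congr_fun (g := fun τ => τ ^ m * c m) measurableSet_Ioc
      (fun τ hτ => Real.norm_of_nonneg (mul_nonneg (pow_nonneg hτ.1.le _) (hcpos m).le))]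
    rw [← _root_.intervalIntegral.integral_of_le h01, _root_.intervalIntegral.integral_mul_const, integral_pow]
    norm_num
  have hsummableNorm : Summable (fun m : ℕ => ∫ τ in Set.Ioc (0:ℝ) 1, ‖τ ^ m * c m‖) := by
    refine Summable.of_nonneg_of_le (fun m => integral_nonneg fun τ => norm_nonneg _)
      (fun m => ?_) hsummc
    rw [hnormint m]
    calc (1 / (m + 1 : ℝ)) * c m ≤ 1 * c m := by
          gcongr
          rw [div_le_one (by positivity)]
          simp
    _ = c m := one_mul _
  have hsA0 := MeasureTheory.hasSum_integral_of_summable_integral_norm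
      (μ := volume.restrict (Set.Ioc (0:ℝ) 1)) (F := fun m (τ : ℝ) => τ ^ m * c m)
      hFint hsummableNorm
  have hfun : (fun m : ℕ => ∫ τ in Set.Ioc (0:ℝ) 1, τ ^ m * c m)
      = fun m => (∫ τ in (0:ℝ)..1, τ ^ m) * c m := by
    funext m
    rw [← _root_.intervalIntegral.integral_of_le h01, _root_.intervalIntegral.integral_mul_const]
  have hval : (∫ τ in Set.Ioc (0:ℝ) 1, ∑' m : ℕ, τ ^ m * c m)
      = ∫ τ in (0:ℝ)..1, (t - τ)⁻¹ := by
    rw [_root_.intervalIntegral.integral_of_le h01]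
    exact setIntegral_congr_fun measurableSet_Ioc fun τ hτ => (hgeom τ hτ.1.le hτ.2).tsum_eq
  rw [hfun, hval] at hsA0
  -- Part B : node contributions
  have hsB : HasSum (fun m => ∑ j, R j * (a j ^ m * c m)) (∑ j, R j * (t - a j)⁻¹) :=
    hasSum_sum fun j _ => (hgeom (a j) (hmem j).1 (hmem j).2).mul_left (R j)
  -- combined sum
  have hsum : HasSum (fun m : ℕ => k m * t ^ (-(m + 1 : ℤ)))
      ((∫ τ in (0:ℝ)..1, (t - τ)⁻¹) - ∑ j, R j * (t - a j)⁻¹) := by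
    have h := hsA0.sub hsB
    have heq : (fun m : ℕ => k m * t ^ (-(m + 1 : ℤ)))
        = fun m => (∫ τ in (0:ℝ)..1, τ ^ m) * c m - ∑ j, R j * (a j ^ m * c m) := by
      funext m
      rw [hk m, hzc m, sub_mul, Finset.sum_mul]
      congr 1
      exact Finset.sum_congr rfl fun j _ => by ring
    rw [heq]
    exact h
  -- final identity
  have hfinal : (∫ τ in (0:ℝ)..1, (t - τ)⁻¹) - ∑ j, R j * (t - a j)⁻¹
      = (∫ τ in (0:ℝ)..1, T.eval τ / (t - τ)) / T.eval t := by
    have hiq : (∫ τ in (0:ℝ)..1, q.eval τ) = ∑ j, R j * (T.eval t * (t - a j)⁻¹) := by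
      rw [exact q hqdeg]
      refine Finset.sum_congr rfl fun j _ => ?_
      congr 1
      field_simp [(hta j).ne']
      linear_combination hqa j
    have hsplit : ∀ τ ∈ Set.uIcc (0:ℝ) 1,
        (t - τ)⁻¹ = q.eval τ / T.eval t + (T.eval τ / (t - τ)) / T.eval t := by
      intro τ hτ
      rw [Set.uIcc_of_le h01] at hτ
      have htτ : t - τ ≠ 0 := by have := hτ.2; intro h; linarith [sub_eq_zero.mp h ▸ ht]
      have hq' := hqev τ
      field_simp
      linear_combination hq'
    have hInt2 : IntervalIntegrable (fun τ => q.eval τ / T.eval t) volume 0 1 :=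
      Continuous.intervalIntegrable ((Polynomial.continuous q).div_const _) _ _
    have hInt3 : IntervalIntegrable (fun τ => (T.eval τ / (t - τ)) / T.eval t) volume 0 1 := by
      apply ContinuousOn.intervalIntegrable
      apply ContinuousOn.div_const
      apply ContinuousOn.div (Polynomial.continuous T).continuousOn
        (continuous_const.sub continuous_id).continuousOn
      intro τ hτ h
      rw [Set.uIcc_of_le h01] at hτ
      have h2 : t = τ := sub_eq_zero.mp h
      linarith [hτ.2]
    rw [_root_.intervalIntegral.integral_congr hsplit,
      _root_.intervalIntegral.integral_add hInt2 hInt3,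
      _root_.intervalIntegral.integral_div, hiq]
    have hcancel : (∑ j, R j * (T.eval t * (t - a j)⁻¹)) / T.eval t
        = ∑ j, R j * (t - a j)⁻¹ := by
      rw [Finset.sum_div]
      refine Finset.sum_congr rfl fun j _ => ?_
      rw [mul_div_assoc, mul_div_cancel_left₀ _ hTt']
    rw [hcancel, _root_.intervalIntegral.integral_div]
    ring
  exact ⟨hsum.summable, hsum.tsum_eq.trans hfinal⟩
end

section
/- Define real polynomials W_m by W₀ = 1, W₁ = X, and W_{m+1} = X·W_m − (m² / ((2m − 1)(2m + 1)))·W_{m−1} for m ≥ 1. Then for every m ∈ ℕ, ∫_{−1}^{1} u^m · W_m(u) du = 2^{2m+1}·(m!)⁴ / ((2m)!·(2m+1)!). -/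
open Polynomial intervalIntegral Finset


noncomputable def PInt (p : ℝ[X]) : ℝ := ∫ u in (-1:ℝ)..1, p.eval u

lemma PInt_intble (p : ℝ[X]) :
    IntervalIntegrable (fun u => p.eval u) MeasureTheory.volume (-1:ℝ) 1 :=
  p.continuous.intervalIntegrable _ _

lemma PInt_add (p q : ℝ[X]) : PInt (p + q) = PInt p + PInt q := by
  unfold PInt
  simp only [eval_add]
  exact integral_add (PInt_intble p) (PInt_intble q)

lemma PInt_C_mul (a : ℝ) (p : ℝ[X]) : PInt (C a * p) = a * PInt p := by
  unfold PInt
  simp only [eval_mul, eval_C]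
  exact integral_const_mul a _

lemma PInt_sub (p q : ℝ[X]) : PInt (p - q) = PInt p - PInt q := by
  unfold PInt
  simp only [eval_sub]
  exact integral_sub (PInt_intble p) (PInt_intble q)

lemma PInt_derivative (p : ℝ[X]) : PInt (derivative p) = p.eval 1 - p.eval (-1) := by
  unfold PInt
  exact integral_deriv_eq_sub' (fun x => p.eval x)
    (funext fun x => p.deriv)
    (fun x _ => p.differentiable.differentiableAt)
    ((derivative p).continuous.continuousOn)

lemma Jval : ∀ m : ℕ, PInt ((1 - (X:ℝ[X])^2)^m)
    = 2^(2*m+1) * (m.factorial : ℝ)^2 / ((2*m+1).factorial : ℝ) := by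
  intro m
  induction m with
  | zero =>
      simp only [pow_zero, Nat.mul_zero, Nat.zero_add, Nat.factorial]
      unfold PInt
      simp
      norm_num
  | succ m ih =>
      have key : C ((2*(m:ℝ)+3)) * (1 - (X:ℝ[X])^2)^(m+1)
          = C (2*(m:ℝ)+2) * (1 - (X:ℝ[X])^2)^m + derivative (X * (1 - (X:ℝ[X])^2)^(m+1)) := by
        rw [derivative_mul, derivative_X, derivative_pow]
        simp only [derivative_sub, derivative_one, derivative_X_pow]
        push_cast
        simp only [C_add, C_mul, map_ofNat, C_1]
        ring
      have h1 : PInt (C ((2*(m:ℝ)+3)) * (1 - (X:ℝ[X])^2)^(m+1))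
          = (2*(m:ℝ)+2) * PInt ((1 - (X:ℝ[X])^2)^m) := by
        rw [key, PInt_add, PInt_C_mul, PInt_derivative]
        simp [eval_pow]
      rw [PInt_C_mul] at h1
      have h3 : (2*(m:ℝ)+3) ≠ 0 := by positivity
      have h4 : PInt ((1 - (X:ℝ[X])^2)^(m+1)) = (2*(m:ℝ)+2)/(2*(m:ℝ)+3) * PInt ((1 - (X:ℝ[X])^2)^m) := by
        field_simp
        linarith [h1]
      rw [h4, ih]
      rw [show 2*(m+1)+1 = (2*m+1)+1+1 by ring, Nat.factorial_succ ((2*m+1)+1), Nat.factorial_succ (2*m+1),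
        Nat.factorial_succ m]
      have f1 : ((2*m+1).factorial : ℝ) ≠ 0 := Nat.cast_ne_zero.2 (Nat.factorial_ne_zero _)
      push_cast
      field_simp
      ring

lemma boundary (m j : ℕ) (hj : j < m) (a : ℝ) (ha : a = 1 ∨ a = -1) :
    (derivative^[j] (((X:ℝ[X])^2 - 1)^m)).eval a = 0 := by
  have hdvd : (X - C a) ∣ ((X:ℝ[X])^2 - 1) := by
    refine dvd_iff_isRoot.2 ?_
    rcases ha with rfl | rfl <;> simp [IsRoot]
  have h2 : (X - C a)^m ∣ ((X:ℝ[X])^2 - 1)^m := pow_dvd_pow_of_dvd hdvd m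
  have h3 : (X - C a)^(m - j) ∣ derivative^[j] (((X:ℝ[X])^2 - 1)^m) :=
    pow_sub_dvd_iterate_derivative_of_pow_dvd j h2
  have h4 : (X - C a) ∣ derivative^[j] (((X:ℝ[X])^2 - 1)^m) :=
    dvd_trans (dvd_pow_self _ (by omega)) h3
  exact dvd_iff_isRoot.1 h4

lemma Aval (m : ℕ) : ∀ j, j ≤ m →
    PInt (X^j * derivative^[j] (((X:ℝ[X])^2 - 1)^m))
      = (-1)^j * (j.factorial : ℝ) * PInt (((X:ℝ[X])^2 - 1)^m) := by
  intro j
  induction j with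
  | zero => intro _; simp
  | succ j ih =>
      intro hj
      have hjm : j ≤ m := by omega
      set f : ℝ[X] := ((X:ℝ[X])^2 - 1)^m with hf
      have key : X^(j+1) * derivative^[j+1] f
          = derivative (X^(j+1) * derivative^[j] f) - C ((j:ℝ)+1) * (X^j * derivative^[j] f) := by
        rw [Function.iterate_succ_apply', derivative_mul, derivative_X_pow]
        push_cast
        simp only [Nat.add_sub_cancel, C_add, C_1]
        ring
      rw [key, PInt_sub, PInt_derivative, PInt_C_mul]
      have b1 : (derivative^[j] f).eval 1 = 0 := boundary m j (by omega) 1 (Or.inl rfl)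
      have b2 : (derivative^[j] f).eval (-1) = 0 := boundary m j (by omega) (-1) (Or.inr rfl)
      rw [eval_mul, eval_mul, b1, b2, ih hjm]
      rw [Nat.factorial_succ]
      push_cast
      ring

noncomputable def bcoef (m k : ℕ) : ℝ :=
  (-1)^k * ((m.choose k * Nat.descFactorial (2*m - 2*k) m * m.factorial : ℕ) : ℝ)
    / (((2*m).factorial : ℕ) : ℝ)

noncomputable def cr (m : ℕ) : ℝ := (m:ℝ)^2 / ((2*(m:ℝ) - 1) * (2*(m:ℝ) + 1))

lemma bcoef_eq_zero {m k : ℕ} (h : m < 2*k) : bcoef m k = 0 := by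
  unfold bcoef
  rcases le_or_gt k m with hk | hk
  · have : Nat.descFactorial (2*m - 2*k) m = 0 :=
      Nat.descFactorial_eq_zero_iff_lt.2 (by omega)
    simp [this]
  · simp [Nat.choose_eq_zero_of_lt hk]

lemma bcoef_zero (m : ℕ) : bcoef m 0 = 1 := by
  unfold bcoef
  have h := Nat.factorial_mul_descFactorial (show m ≤ 2*m by omega)
  rw [show 2*m - m = m by omega] at h
  simp only [Nat.choose_zero_right, Nat.mul_zero, Nat.sub_zero, one_mul, pow_zero]
  rw [show Nat.descFactorial (2*m) m * m.factorial = (2*m).factorial by rw [← h]; ring]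
  rw [div_self (Nat.cast_ne_zero.2 (Nat.factorial_ne_zero _))]

lemma bcoef_formula {m k : ℕ} (h : 2*k ≤ m) :
    bcoef m k = (-1)^k * ((m.factorial:ℝ) * (m.factorial:ℝ) * ((2*m-2*k).factorial : ℝ))
      / (((2*m).factorial:ℝ) * (k.factorial:ℝ) * ((m-k).factorial:ℝ) * ((m-2*k).factorial:ℝ)) := by
  have hkm : k ≤ m := by omega
  have h1 : (m.choose k : ℝ) * ((k.factorial : ℝ) * ((m-k).factorial : ℝ)) = (m.factorial : ℝ) := by
    exact_mod_cast congrArg (Nat.cast : ℕ → ℝ)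
      (by rw [← Nat.choose_mul_factorial_mul_factorial hkm]; ring)
  have h2 : ((m-2*k).factorial : ℝ) * (Nat.descFactorial (2*m-2*k) m : ℝ)
      = ((2*m-2*k).factorial : ℝ) := by
    have := Nat.factorial_mul_descFactorial (show m ≤ 2*m-2*k by omega)
    rw [show 2*m-2*k-m = m-2*k by omega] at this
    exact_mod_cast congrArg (Nat.cast : ℕ → ℝ) this
  unfold bcoef
  push_cast
  have n1 : ((2*m).factorial:ℝ) ≠ 0 := Nat.cast_ne_zero.2 (Nat.factorial_ne_zero _)
  have n2 : (k.factorial:ℝ) ≠ 0 := Nat.cast_ne_zero.2 (Nat.factorial_ne_zero _)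
  have n3 : ((m-k).factorial:ℝ) ≠ 0 := Nat.cast_ne_zero.2 (Nat.factorial_ne_zero _)
  have n4 : ((m-2*k).factorial:ℝ) ≠ 0 := Nat.cast_ne_zero.2 (Nat.factorial_ne_zero _)
  rw [div_eq_div_iff n1 (by positivity)]
  linear_combination ((-1:ℝ)^k * ((2*m).factorial:ℝ) * (Nat.descFactorial (2*m-2*k) m : ℝ)
      * (m.factorial:ℝ) * ((m-2*k).factorial:ℝ)) * h1
    + ((-1:ℝ)^k * ((2*m).factorial:ℝ) * (m.factorial:ℝ) * (m.factorial:ℝ)) * h2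

lemma b_rec_A (k d : ℕ) :
    bcoef (2*k+2+d+1) (k+1) = bcoef (2*k+2+d) (k+1) - cr (2*k+2+d) * bcoef (2*k+2+d-1) k := by
  rw [bcoef_formula (show 2*(k+1) ≤ 2*k+2+d+1 by omega),
      bcoef_formula (show 2*(k+1) ≤ 2*k+2+d by omega),
      bcoef_formula (show 2*k ≤ 2*k+2+d-1 by omega)]
  rw [show 2*(2*k+2+d+1)-2*(k+1) = (2*k+2+2*d)+1+1 by omega,
      show 2*(2*k+2+d+1) = (4*k+2+2*d)+1+1+1+1 by omega,
      show (2*k+2+d+1)-(k+1) = (k+1+d)+1 by omega,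
      show (2*k+2+d+1)-2*(k+1) = d+1 by omega,
      show 2*k+2+d+1 = (2*k+1+d)+1+1 by omega,
      show 2*(2*k+2+d)-2*(k+1) = 2*k+2+2*d by omega,
      show 2*(2*k+2+d) = (4*k+2+2*d)+1+1 by omega,
      show (2*k+2+d)-(k+1) = k+1+d by omega,
      show (2*k+2+d)-2*(k+1) = d by omega,
      show 2*(2*k+2+d-1)-2*k = 2*k+2+2*d by omega,
      show 2*(2*k+2+d-1) = 4*k+2+2*d by omega,
      show (2*k+2+d-1)-k = k+1+d by omega,
      show (2*k+2+d-1)-2*k = d+1 by omega,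
      show 2*k+2+d-1 = 2*k+1+d by omega,
      show 2*k+2+d = (2*k+1+d)+1 by omega]
  unfold cr
  simp only [Nat.factorial_succ]
  have F1 : ((2*k+1+d).factorial : ℝ) ≠ 0 := Nat.cast_ne_zero.2 (Nat.factorial_ne_zero _)
  have F2 : ((2*k+2+2*d).factorial : ℝ) ≠ 0 := Nat.cast_ne_zero.2 (Nat.factorial_ne_zero _)
  have F3 : ((4*k+2+2*d).factorial : ℝ) ≠ 0 := Nat.cast_ne_zero.2 (Nat.factorial_ne_zero _)
  have F4 : ((k).factorial : ℝ) ≠ 0 := Nat.cast_ne_zero.2 (Nat.factorial_ne_zero _)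
  have F5 : ((k+1+d).factorial : ℝ) ≠ 0 := Nat.cast_ne_zero.2 (Nat.factorial_ne_zero _)
  have F6 : ((d).factorial : ℝ) ≠ 0 := Nat.cast_ne_zero.2 (Nat.factorial_ne_zero _)
  push_cast
  have hk : (0:ℝ) ≤ (k:ℝ) := Nat.cast_nonneg k
  have hd : (0:ℝ) ≤ (d:ℝ) := Nat.cast_nonneg d
  have G1 : 2*((2:ℝ)*k+1+d+1) - 1 ≠ 0 := by nlinarith
  have G2 : 2*((2:ℝ)*k+1+d+1) + 1 ≠ 0 := by nlinarith
  field_simp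
  ring


lemma b_rec_B (k : ℕ) :
    bcoef (2*k+1+1) (k+1) = bcoef (2*k+1) (k+1) - cr (2*k+1) * bcoef (2*k+1-1) k := by
  rw [bcoef_eq_zero (show 2*k+1 < 2*(k+1) by omega), show 2*k+1-1 = 2*k by omega]
  rw [bcoef_formula (show 2*(k+1) ≤ 2*k+1+1 by omega),
      bcoef_formula (show 2*k ≤ 2*k by omega)]
  rw [show 2*(2*k+1+1)-2*(k+1) = 2*k+1+1 by omega]
  rw [show 2*(2*k+1+1) = 4*k+1+1+1+1 by omega]
  rw [show (2*k+1+1)-(k+1) = k+1 by omega]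
  rw [show (2*k+1+1)-2*(k+1) = 0 by omega]
  rw [show 2*(2*k)-2*k = 2*k+0 by omega]
  rw [show (2*k)-k = k+0 by omega]
  rw [show (2*k)-2*k = 0 by omega]
  rw [show 2*(2*k) = 4*k+0 by omega]
  unfold cr
  simp only [Nat.factorial_succ, Nat.factorial_zero, Nat.add_zero]
  have F1 : ((2*k).factorial : ℝ) ≠ 0 := Nat.cast_ne_zero.2 (Nat.factorial_ne_zero _)
  have F3 : ((4*k).factorial : ℝ) ≠ 0 := Nat.cast_ne_zero.2 (Nat.factorial_ne_zero _)
  have F4 : ((k).factorial : ℝ) ≠ 0 := Nat.cast_ne_zero.2 (Nat.factorial_ne_zero _)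
  push_cast
  have hk : (0:ℝ) ≤ (k:ℝ) := Nat.cast_nonneg k
  have G1 : 2*((2:ℝ)*k+1) - 1 ≠ 0 := by nlinarith
  have G2 : 2*((2:ℝ)*k+1) + 1 ≠ 0 := by nlinarith
  field_simp
  ring

lemma b_rec {m : ℕ} (hm : 1 ≤ m) (k : ℕ) :
    bcoef (m+1) (k+1) = bcoef m (k+1) - cr m * bcoef (m-1) k := by
  rcases le_or_gt (2*k+2) m with hA | hB
  · obtain ⟨d, rfl⟩ := Nat.exists_eq_add_of_le hA
    exact b_rec_A k d
  · rcases eq_or_lt_of_le (show m ≤ 2*k+1 by omega) with hB1 | hB2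
    · subst hB1
      exact b_rec_B k
    · have z1 : bcoef (m+1) (k+1) = 0 := bcoef_eq_zero (by omega)
      have z2 : bcoef m (k+1) = 0 := bcoef_eq_zero (by omega)
      have z3 : bcoef (m-1) k = 0 := bcoef_eq_zero (by omega)
      rw [z1, z2, z3]
      ring

noncomputable def Q (m : ℕ) : ℝ[X] := ∑ k ∈ range (m+1), C (bcoef m k) * X^(m-2*k)

lemma Q_zero : Q 0 = 1 := by
  unfold Q
  rw [Finset.sum_range_one, bcoef_zero]
  simp

lemma Q_one : Q 1 = X := by
  unfold Q
  rw [Finset.sum_range_succ, Finset.sum_range_one, bcoef_zero,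
    bcoef_eq_zero (show 1 < 2*1 by omega)]
  simp

lemma Q_rec (m : ℕ) (hm : 1 ≤ m) : Q (m+1) = X * Q m - C (cr m) * Q (m-1) := by
  obtain ⟨n, rfl⟩ : ∃ n, m = n + 1 := ⟨m - 1, by omega⟩
  simp only [Nat.add_sub_cancel]
  unfold Q
  rw [Finset.mul_sum, Finset.mul_sum]
  rw [Finset.sum_range_succ (fun k => C (bcoef (n+1+1) k) * X^(n+1+1-2*k)) (n+1+1),
    bcoef_eq_zero (show n+1+1 < 2*(n+1+1) by omega), map_zero, zero_mul, add_zero]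
  rw [Finset.sum_range_succ' (fun k => C (bcoef (n+1+1) k) * X^(n+1+1-2*k)) (n+1)]
  rw [Finset.sum_range_succ' (fun k => X * (C (bcoef (n+1) k) * X^(n+1-2*k))) (n+1)]
  rw [add_sub_right_comm, ← Finset.sum_sub_distrib]
  congr 1
  · refine Finset.sum_congr rfl ?_
    intro i _
    have hco : bcoef (n+1+1) (i+1) = bcoef (n+1) (i+1) - cr (n+1) * bcoef n i := by
      simpa using b_rec (show 1 ≤ n+1 by omega) i
    rcases le_or_gt (2*(i+1)) (n+1) with hca | hcb
    · rw [hco, show n+1+1-2*(i+1) = (n+1-2*(i+1)) + 1 by omega,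
        show n-2*i = (n+1-2*(i+1)) + 1 by omega, C_sub, C_mul]
      ring
    · rcases le_or_gt (2*(i+1)) (n+2) with hcc | hcd
      · have hz : bcoef (n+1) (i+1) = 0 := bcoef_eq_zero (by omega)
        rw [hco, hz, show n+1+1-2*(i+1) = 0 by omega, show n-2*i = 0 by omega,
          C_sub, C_mul]
        simp
      · have z1 : bcoef (n+1+1) (i+1) = 0 := bcoef_eq_zero (by omega)
        have z2 : bcoef (n+1) (i+1) = 0 := bcoef_eq_zero (by omega)
        have z3 : bcoef n i = 0 := bcoef_eq_zero (by omega)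
        rw [z1, z2, z3]
        simp
  · rw [bcoef_zero, bcoef_zero]
    simp only [Nat.mul_zero, Nat.sub_zero, C_1, one_mul]
    ring

lemma Q_eq_rodrigues (m : ℕ) :
    Q m = C ((m.factorial : ℝ) / ((2*m).factorial : ℝ))
      * derivative^[m] (((X:ℝ[X])^2 - 1)^m) := by
  have hexp : (((X:ℝ[X])^2 - 1)^m)
      = ∑ i ∈ range (m+1), C ((-1:ℝ)^(i+m) * (m.choose i : ℝ)) * X^(2*i) := by
    rw [sub_pow]
    refine Finset.sum_congr rfl ?_
    intro i _
    rw [← pow_mul]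
    simp only [one_pow, mul_one, C_mul, C_pow, map_neg, C_1, map_natCast]
    ring
  rw [hexp, Polynomial.iterate_derivative_sum, Finset.mul_sum]
  have hterm : ∀ i ∈ range (m+1),
      C ((m.factorial : ℝ) / ((2*m).factorial : ℝ))
        * derivative^[m] (C ((-1:ℝ)^(i+m) * (m.choose i : ℝ)) * X^(2*i))
      = C ((m.factorial : ℝ) / ((2*m).factorial : ℝ) * ((-1:ℝ)^(i+m) * (m.choose i : ℝ))
            * (Nat.descFactorial (2*i) m : ℝ)) * X^(2*i - m) := by
    intro i _
    rw [Polynomial.iterate_derivative_C_mul, Polynomial.iterate_derivative_X_pow_eq_C_mul]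
    simp only [C_mul]
    ring
  rw [Finset.sum_congr rfl hterm]
  rw [← Finset.sum_range_reflect]
  unfold Q
  refine Finset.sum_congr rfl ?_
  intro k hk
  have hkm : k ≤ m := by simpa [Nat.lt_succ_iff] using hk
  rw [show m + 1 - 1 - k = m - k by omega]
  have hsign : ((-1:ℝ))^(m-k+m) = (-1)^k := by
    have h1 : ((-1:ℝ))^(m-k+m) * (-1)^k = ((-1:ℝ))^k * (-1)^k := by
      rw [← pow_add, ← pow_add, show m-k+m+k = 2*m by omega, show k+k = 2*k by omega,
        pow_mul, pow_mul]
      norm_num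
    have h2 : ((-1:ℝ))^k ≠ 0 := by
      simp [pow_ne_zero]
    exact mul_right_cancel₀ h2 h1
  have hchoose : m.choose (m-k) = m.choose k := Nat.choose_symm hkm
  rcases le_or_gt (2*k) m with h2k | h2k
  · rw [show 2*(m-k) - m = m - 2*k by omega, show 2*(m-k) = 2*m - 2*k by omega]
    congr 1
    unfold bcoef
    rw [hsign, hchoose]
    push_cast
    ring
  · have hdz : Nat.descFactorial (2*(m-k)) m = 0 :=
      Nat.descFactorial_eq_zero_iff_lt.2 (by omega)
    have hbz : bcoef m k = 0 := by
      unfold bcoef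
      have : Nat.descFactorial (2*m - 2*k) m = 0 :=
        Nat.descFactorial_eq_zero_iff_lt.2 (by omega)
      simp [this]
    rw [hbz, hdz]
    simp


/-- For the monic Legendre polynomials `W m` given by Gauss's three-term recurrence,
`∫_{−1}^{1} u^m W_m(u) du = 2^{2m+1} (m!)⁴ / ((2m)!(2m+1)!)`. -/
theorem legendre_leading_moment (W : ℕ → Polynomial ℝ)
    (hW0 : W 0 = 1) (hW1 : W 1 = X)
    (hrec : ∀ m : ℕ, 1 ≤ m →
      W (m + 1) = X * W m
        - C ((m : ℝ) ^ 2 / ((2 * (m : ℝ) - 1) * (2 * (m : ℝ) + 1))) * W (m - 1)) :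
    ∀ m : ℕ, ∫ u in (-1:ℝ)..1, u ^ m * (W m).eval u
      = 2 ^ (2 * m + 1) * (Nat.factorial m : ℝ) ^ 4
          / ((Nat.factorial (2 * m) : ℝ) * (Nat.factorial (2 * m + 1) : ℝ)) := by
  have hWQ : ∀ m, W m = Q m ∧ W (m+1) = Q (m+1) := by
    intro m
    induction m with
    | zero => exact ⟨hW0.trans Q_zero.symm, hW1.trans Q_one.symm⟩
    | succ n ih =>
        refine ⟨ih.2, ?_⟩
        rw [hrec (n+1) (by omega), show n+1-1 = n by omega, ih.2, ih.1,
          Q_rec (n+1) (by omega)]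
        simp only [Nat.add_sub_cancel]
        unfold cr
        push_cast
        ring_nf
  intro m
  have hQm : W m = Q m := (hWQ m).1
  have hLHS : (∫ u in (-1:ℝ)..1, u ^ m * (W m).eval u) = PInt (X^m * W m) := by
    unfold PInt
    congr 1
    funext u
    simp [eval_mul, eval_pow]
  rw [hLHS, hQm, Q_eq_rodrigues]
  have hcomm : (X:ℝ[X])^m * (C ((m.factorial : ℝ) / ((2*m).factorial : ℝ))
      * derivative^[m] (((X:ℝ[X])^2 - 1)^m))
      = C ((m.factorial : ℝ) / ((2*m).factorial : ℝ))
        * ((X:ℝ[X])^m * derivative^[m] (((X:ℝ[X])^2 - 1)^m)) := by ring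
  rw [hcomm, PInt_C_mul, Aval m m le_rfl]
  have hneg : (((X:ℝ[X])^2 - 1)^m) = C ((-1:ℝ)^m) * (1 - (X:ℝ[X])^2)^m := by
    rw [show ((X:ℝ[X])^2 - 1) = -(1 - (X:ℝ[X])^2) by ring, neg_pow]
    rw [map_pow, map_neg, C_1]
  rw [hneg, PInt_C_mul, Jval m]
  have hsq2 : ((-1:ℝ))^(m*2) = 1 := by
    rw [pow_mul']
    norm_num
  have n1 : ((2*m).factorial : ℝ) ≠ 0 := Nat.cast_ne_zero.2 (Nat.factorial_ne_zero _)
  have n2 : ((2*m+1).factorial : ℝ) ≠ 0 := Nat.cast_ne_zero.2 (Nat.factorial_ne_zero _)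
  field_simp
  ring_nf
  simp only [hsq2]
end

section
/- Let n ∈ ℕ be even and let a₀, ..., aₙ be pairwise distinct real numbers satisfying the symmetry a_{n−j} = 1 − a_j for all j = 0, ..., n. Let R_j = ∫₀¹ ∏_{i ≠ j} (t − a_i)/(a_j − a_i) dt be the interpolatory weights. Then Σ_{j=0}^{n} R_j · a_j^{n+1} = ∫₀¹ t^{n+1} dt, and consequently the rule is exact for every real polynomial of degree at most n+1. -/
open Polynomial intervalIntegral

/-- For an even `n` and nodes symmetric about the midpoint (`a_{n−j} = 1 − a_j`), the
interpolatory rule also integrates `t^{n+1}` exactly, hence is exact for every polynomial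
of degree at most `n+1`. -/
theorem symmetric_nodes_extra_degree (n : ℕ) (hn : Even n) (a : Fin (n + 1) → ℝ)
    (hinj : Function.Injective a)
    (hsym : ∀ j : Fin (n + 1), a j.rev = 1 - a j)
    (R : Fin (n + 1) → ℝ)
    (hR : ∀ j, R j = ∫ t in (0:ℝ)..1, ∏ i ∈ Finset.univ.erase j, (t - a i) / (a j - a i)) :
    (∑ j, R j * a j ^ (n + 1) = ∫ t in (0:ℝ)..1, t ^ (n + 1)) ∧
    ∀ p : Polynomial ℝ, p.degree ≤ (n + 1 : ℕ) →
      ∑ j, R j * p.eval (a j) = ∫ t in (0:ℝ)..1, p.eval t := by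
  have hinjOn : Set.InjOn a (Finset.univ : Finset (Fin (n + 1))) := hinj.injOn
  -- the weights are the integrals of the Lagrange basis polynomials
  have hRbasis : ∀ j, R j =
      ∫ t in (0:ℝ)..1, (Lagrange.basis Finset.univ a j).eval t := by
    intro j
    rw [hR j]
    have hpt : ∀ t : ℝ, (∏ i ∈ Finset.univ.erase j, (t - a i) / (a j - a i)) =
        (Lagrange.basis Finset.univ a j).eval t := by
      intro t
      rw [Lagrange.basis, eval_prod]
      refine Finset.prod_congr rfl fun i _ => ?_
      simp [Lagrange.basisDivisor, div_eq_inv_mul]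
    simp_rw [hpt]
  -- exactness for polynomials of degree < n + 1 (Lagrange interpolation)
  have exactLow : ∀ p : Polynomial ℝ, p.degree < ((n + 1 : ℕ) : WithBot ℕ) →
      ∑ j, R j * p.eval (a j) = ∫ t in (0:ℝ)..1, p.eval t := by
    intro p hdeg
    have hdeg' : p.degree < (Finset.univ : Finset (Fin (n + 1))).card := by
      simpa using hdeg
    have hpt : ∀ t : ℝ, p.eval t =
        ∑ j, p.eval (a j) * (Lagrange.basis Finset.univ a j).eval t := by
      intro t
      conv_lhs => rw [Lagrange.eq_interpolate hinjOn hdeg']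
      rw [Lagrange.interpolate_apply, eval_finset_sum]
      exact Finset.sum_congr rfl fun j _ => by rw [eval_mul, eval_C]
    have hint : ∀ j : Fin (n + 1), IntervalIntegrable
        (fun t => p.eval (a j) * (Lagrange.basis Finset.univ a j).eval t)
        MeasureTheory.volume 0 1 :=
      fun j => (continuous_const.mul (Polynomial.continuous _)).intervalIntegrable _ _
    calc ∑ j, R j * p.eval (a j)
        = ∑ j, p.eval (a j) * ∫ t in (0:ℝ)..1, (Lagrange.basis Finset.univ a j).eval t := by
          exact Finset.sum_congr rfl fun j _ => by rw [hRbasis j, mul_comm]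
      _ = ∑ j, ∫ t in (0:ℝ)..1,
            p.eval (a j) * (Lagrange.basis Finset.univ a j).eval t := by
          exact Finset.sum_congr rfl fun j _ =>
            (intervalIntegral.integral_const_mul _ _).symm
      _ = ∫ t in (0:ℝ)..1, ∑ j,
            p.eval (a j) * (Lagrange.basis Finset.univ a j).eval t :=
          (intervalIntegral.integral_finset_sum fun j _ => hint j).symm
      _ = ∫ t in (0:ℝ)..1, p.eval t := by simp_rw [← hpt]
  -- the node polynomial
  set P : Polynomial ℝ := ∏ i : Fin (n + 1), (X - C (a i)) with hPdef
  have hPmonic : P.Monic := monic_prod_of_monic _ _ fun i _ => monic_X_sub_C _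
  have hPnatDeg : P.natDegree = n + 1 := by
    rw [hPdef, natDegree_prod_of_monic _ _ fun i _ => monic_X_sub_C _]
    simp
  have hPevalNode : ∀ j : Fin (n + 1), P.eval (a j) = 0 := by
    intro j
    rw [hPdef, eval_prod]
    exact Finset.prod_eq_zero (Finset.mem_univ j) (by simp)
  -- the integral of the node polynomial vanishes by symmetry
  have hPodd : ∀ t : ℝ, P.eval (1 - t) = - P.eval t := by
    intro t
    have h1 : P.eval (1 - t) = ∏ i : Fin (n + 1), (1 - t - a i) := by
      rw [hPdef, eval_prod]; simp
    have h2 : (∏ i : Fin (n + 1), (1 - t - a i)) =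
        ∏ i : Fin (n + 1), (1 - t - a i.rev) :=
      (Equiv.prod_comp Fin.revPerm fun i => (1 - t - a i)).symm
    have h3 : (∏ i : Fin (n + 1), (1 - t - a i.rev)) =
        ∏ i : Fin (n + 1), (-1) * (t - a i) := by
      refine Finset.prod_congr rfl fun i _ => ?_
      rw [hsym i]; ring
    have h4 : (∏ i : Fin (n + 1), (-1 : ℝ) * (t - a i)) = - P.eval t := by
      rw [Finset.prod_mul_distrib, Finset.prod_const, Finset.card_univ, Fintype.card_fin]
      have : Odd (n + 1) := hn.add_one
      rw [this.neg_one_pow]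
      rw [hPdef, eval_prod]
      simp [neg_mul]
    rw [h1, h2, h3, h4]
  have hPint : (∫ t in (0:ℝ)..1, P.eval t) = 0 := by
    have h1 : (∫ t in (0:ℝ)..1, P.eval (1 - t)) = ∫ t in (0:ℝ)..1, P.eval t := by
      rw [intervalIntegral.integral_comp_sub_left (fun t => P.eval t) 1]
      norm_num
    have h2 : (∫ t in (0:ℝ)..1, P.eval (1 - t)) = - ∫ t in (0:ℝ)..1, P.eval t := by
      simp_rw [hPodd]
      exact intervalIntegral.integral_neg
    linarith [h1, h2]
  -- main exactness statement for degree ≤ n + 1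
  have main : ∀ p : Polynomial ℝ, p.degree ≤ (n + 1 : ℕ) →
      ∑ j, R j * p.eval (a j) = ∫ t in (0:ℝ)..1, p.eval t := by
    intro p hdeg
    set c : ℝ := p.coeff (n + 1) with hc
    set q : Polynomial ℝ := p - C c * P with hq
    have hqdeg : q.degree < ((n + 1 : ℕ) : WithBot ℕ) := by
      rw [Polynomial.degree_lt_iff_coeff_zero]
      intro m hm
      rcases eq_or_lt_of_le hm with h | h
      · have hPc : P.coeff (n + 1) = 1 := by
          have := hPmonic.coeff_natDegree
          rwa [hPnatDeg] at this
        rw [hq, coeff_sub, coeff_C_mul, ← h, hPc, hc]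
        ring
      · have hpm : p.coeff m = 0 :=
          coeff_eq_zero_of_degree_lt (lt_of_le_of_lt hdeg (by exact_mod_cast h))
        have hPm : P.coeff m = 0 :=
          coeff_eq_zero_of_natDegree_lt (by omega)
        rw [hq, coeff_sub, coeff_C_mul, hpm, hPm]
        ring
    have hsum : ∑ j, R j * p.eval (a j) = ∑ j, R j * q.eval (a j) := by
      refine Finset.sum_congr rfl fun j _ => ?_
      rw [hq, eval_sub, eval_mul, eval_C, hPevalNode j]
      ring
    have hint : ∀ t : ℝ, p.eval t = q.eval t + c * P.eval t := by
      intro t; rw [hq, eval_sub, eval_mul, eval_C]; ring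
    have hIq : IntervalIntegrable (fun t => q.eval t) MeasureTheory.volume 0 1 :=
      (Polynomial.continuous _).intervalIntegrable _ _
    have hIP : IntervalIntegrable (fun t => c * P.eval t) MeasureTheory.volume 0 1 :=
      (continuous_const.mul (Polynomial.continuous _)).intervalIntegrable _ _
    calc ∑ j, R j * p.eval (a j) = ∑ j, R j * q.eval (a j) := hsum
      _ = ∫ t in (0:ℝ)..1, q.eval t := exactLow q hqdeg
      _ = (∫ t in (0:ℝ)..1, q.eval t) + c * ∫ t in (0:ℝ)..1, P.eval t := by
          rw [hPint]; ring
      _ = ∫ t in (0:ℝ)..1, (q.eval t + c * P.eval t) := by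
          rw [intervalIntegral.integral_add hIq hIP,
            intervalIntegral.integral_const_mul]
      _ = ∫ t in (0:ℝ)..1, p.eval t := by simp_rw [← hint]
  refine ⟨?_, main⟩
  have := main (X ^ (n + 1)) (degree_X_pow_le _)
  simpa using this
end
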